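/- arXiv:1812.06386 — 7 statements merged into one kernel-verified Lean document; each statement's English description precedes it below -/
import Mathlib

section
/- Let μ be an infinite cardinal and k a positive natural number. Then μ →_hc (μ)²_k holds: for every coloring c : [μ]² → k there exist a color i < k and a set B ⊆ μ with |B| = μ such that the i-monochromatic graph on B is highly connected (i.e., μ-connected). -/
/-!
Fix a uniform ultrafilter `U` on `μ`, i.e. one containing every set whose complement has size
`< μ`. Since there are only finitely many colors, each vertex `u` has a color `g u` such that
`U`-almost every `w` satisfies `c {u, w} = g u`, and `g` itself is constant, say `ξ`, on some
`X ∈ U`; uniformity gives `|X| = μ`. Removing a set `S` of size `< μ` keeps `X \ S` in `U`, and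
any two vertices of `X \ S` have their `ξ`-neighbourhoods in `U`, so those meet inside `X \ S`:
the `ξ`-monochromatic graph on `X \ S` has diameter at most two.
-/

open Cardinal

/-- The `ξ`-monochromatic graph determined by the pair-coloring `c`:
vertices `a ≠ b` are adjacent iff `c` gives the pair `{a, b}` the color `ξ`. -/
def monoGraph {V K : Type} (c : Sym2 V → K) (ξ : K) : SimpleGraph V where
  Adj a b := a ≠ b ∧ c s(a, b) = ξ
  symm := by
    constructor
    intro a b h
    exact ⟨h.1.symm, by rw [Sym2.eq_swap]; exact h.2⟩
  loopless := by
    constructor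
    intro a h
    exact h.1 rfl

/-- The graph `G`, restricted to the vertex set `X`, is `κ`-connected:
deleting any set of fewer than `κ` vertices leaves it connected. -/
def KConnOn {V : Type} (G : SimpleGraph V) (X : Set V) (κ : Cardinal) : Prop :=
  ∀ S : Set V, S ⊆ X → #S < κ → (G.induce (X \ S)).Connected

/-- `ν →_{κ-c} (μ)²_λ`: every coloring of the edges of the complete graph on `ν`
by `λ` many colors admits a color `ξ` and a size-`μ` set of vertices on which the
`ξ`-monochromatic graph is `κ`-connected. -/
def ArrowConn (ν μ κ lam : Cardinal) : Prop :=
  ∀ (V K : Type), #V = ν → #K = lam → ∀ c : Sym2 V → K,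
    ∃ (ξ : K) (X : Set V), #X = μ ∧ KConnOn (monoGraph c ξ) X κ

/-- `ν →_{hc} (μ)²_λ`, i.e. `ν →_{μ-c} (μ)²_λ`: there is a size-`μ`
monochromatic subgraph which is highly connected. -/
def ArrowHC (ν μ lam : Cardinal) : Prop := ArrowConn ν μ μ lam

universe u

namespace Ultrafilter

variable {α : Type u}

/-- Equivalently, every member of `U` has cardinality `#α` (`IsUniform.mk_eq_of_mem`). -/
def IsUniform (U : Ultrafilter α) : Prop :=
  ∀ s : Set α, #s < #α → sᶜ ∈ U

theorem exists_isUniform (hα : ℵ₀ ≤ #α) : ∃ U : Ultrafilter α, U.IsUniform := by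
  let F : Filter α := Filter.comk (fun s => #s < #α)
    (by simpa using aleph0_pos.trans_le hα)
    (fun _ ht _ hst => (mk_le_mk_of_subset hst).trans_lt ht)
    (fun _ hs _ ht => (mk_union_le _ _).trans_lt (add_lt_of_lt hα hs ht))
  have : F.NeBot := ⟨fun h => by
    have hempty : (∅ : Set α) ∈ F := h ▸ Filter.mem_bot
    simp [F, Filter.mem_comk] at hempty⟩
  exact ⟨Ultrafilter.of F, fun s hs => Ultrafilter.of_le F <| by simpa [F, Filter.mem_comk]⟩

namespace IsUniform

variable {U : Ultrafilter α} {s t : Set α}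

theorem mk_eq_of_mem (hU : U.IsUniform) (hs : s ∈ U) : #s = #α := by
  refine le_antisymm (mk_set_le s) (not_lt.mp fun hlt => ?_)
  exact U.compl_notMem_iff.mpr hs (hU s hlt)

theorem diff_mem (hU : U.IsUniform) (hs : s ∈ U) (ht : #t < #α) : s \ t ∈ U :=
  U.inter_mem hs (hU t ht)

end IsUniform

theorem exists_preimage_singleton_mem {β : Type*} [Finite β] (U : Ultrafilter α)
    (f : α → β) : ∃ b, f ⁻¹' {b} ∈ U :=
  eventually_exists_iff.mp (Filter.Eventually.of_forall fun a => ⟨f a, rfl⟩)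

end Ultrafilter

namespace SimpleGraph

variable {V : Type u} {G : SimpleGraph V} {U : Ultrafilter V} {Y : Set V}

theorem induce_connected_of_neighborSet_mem (hY : Y ∈ U)
    (hN : ∀ v ∈ Y, G.neighborSet v ∈ U) : (G.induce Y).Connected := by
  have : Nonempty Y := (U.nonempty_of_mem hY).to_subtype
  refine ⟨fun ⟨u, hu⟩ ⟨v, hv⟩ => ?_⟩
  obtain ⟨w, ⟨huw, hvw⟩, hw⟩ :=
    U.nonempty_of_mem (U.inter_mem (U.inter_mem (hN u hu) (hN v hv)) hY)
  have huw' : (G.induce Y).Adj ⟨u, hu⟩ ⟨w, hw⟩ := huw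
  have hwv' : (G.induce Y).Adj ⟨w, hw⟩ ⟨v, hv⟩ := G.adj_symm hvw
  exact huw'.reachable.trans hwv'.reachable

theorem kConnOn_of_neighborSet_mem {V : Type} {G : SimpleGraph V} {U : Ultrafilter V}
    {X : Set V} (hU : U.IsUniform) (hX : X ∈ U)
    (hN : ∀ v ∈ X, G.neighborSet v ∈ U) : KConnOn G X #V := fun _ _ hS =>
  induce_connected_of_neighborSet_mem (hU.diff_mem hX hS) fun v hv => hN v hv.1

end SimpleGraph

theorem monoGraph_neighborSet {V K : Type} (c : Sym2 V → K) (ξ : K) (v : V) :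
    (monoGraph c ξ).neighborSet v = (fun w => c s(v, w)) ⁻¹' {ξ} \ {v} := by
  ext w
  simp [monoGraph, SimpleGraph.mem_neighborSet, and_comm, eq_comm]

theorem stmt0_general (μ : Cardinal) (hμ : ℵ₀ ≤ μ) (k : ℕ) :
    ArrowHC μ μ (k : Cardinal) := by
  intro V K hV hK c
  subst hV
  have : Finite K := lt_aleph0_iff_finite.mp (hK ▸ natCast_lt_aleph0)
  obtain ⟨U, hU⟩ := Ultrafilter.exists_isUniform hμ
  choose g hg using fun v => U.exists_preimage_singleton_mem fun w => c s(v, w)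
  obtain ⟨ξ, hξ⟩ := U.exists_preimage_singleton_mem g
  refine ⟨ξ, g ⁻¹' {ξ}, hU.mk_eq_of_mem hξ, SimpleGraph.kConnOn_of_neighborSet_mem hU hξ
    fun v hv => ?_⟩
  rw [monoGraph_neighborSet, ← show g v = ξ from hv]
  exact hU.diff_mem (hg v) ((mk_singleton v).trans_lt (one_lt_aleph0.trans_le hμ))

/-- Proposition 2 (Bergfalk–Hrušák–Shelah): if `μ` is an infinite cardinal and
`k` a positive natural number, then `μ →_hc (μ)²_k`. -/
theorem stmt0 (μ : Cardinal) (hμ : ℵ₀ ≤ μ) (k : ℕ) (hk : 0 < k) :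
    ArrowHC μ μ (k : Cardinal) :=
  stmt0_general μ hμ k
end

section
/- Let μ be an infinite cardinal and λ a nonzero cardinal with λ < cf(μ). Then μ →_{1-c} (μ)²_λ holds: for every coloring c : [μ]² → λ there exist a color ξ < λ and a set X ⊆ μ with |X| = μ such that the ξ-monochromatic graph on X is connected. -/
open Cardinal

/-! Fix a vertex `v`. By the pigeonhole principle for `λ < cf(μ)`, some color `ξ` is taken by
`μ` many of the pairs `{v, w}`; together with `v`, these `w` span a `ξ`-monochromatic star,
which is connected. -/

theorem kConnOn_one_iff {V : Type} (G : SimpleGraph V) (X : Set V) :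
    KConnOn G X 1 ↔ (G.induce X).Connected := by
  refine ⟨fun h => ?_, fun h S _ hS => ?_⟩
  · have h_empty := h ∅ (Set.empty_subset X) (by simp)
    rwa [Set.sdiff_empty] at h_empty
  · obtain rfl : S = ∅ := by simpa [Cardinal.lt_one_iff, Cardinal.mk_set_eq_zero_iff] using hS
    rwa [Set.sdiff_empty]

theorem SimpleGraph.induce_connected_of_forall_adj {V : Type} (G : SimpleGraph V) {X : Set V}
    {v : V} (hv : v ∈ X) (hadj : ∀ x ∈ X, x ≠ v → G.Adj v x) : (G.induce X).Connected := by
  have reach_center : ∀ x : X, (G.induce X).Reachable ⟨v, hv⟩ x := by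
    rintro ⟨x, hx⟩
    by_cases hxv : x = v
    · subst hxv; rfl
    · exact SimpleGraph.Adj.reachable (by simpa using hadj x hx hxv)
  rw [SimpleGraph.connected_iff]
  exact ⟨fun a b => (reach_center a).symm.trans (reach_center b), ⟨⟨v, hv⟩⟩⟩

theorem stmt1_general (μ lam : Cardinal) (hμ : ℵ₀ ≤ μ)
    (hcof : lam < μ.ord.cof) :
    ArrowConn μ μ 1 lam := by
  intro V K hV hK c
  obtain ⟨v⟩ : Nonempty V := Cardinal.infinite_iff.mpr (hV ▸ hμ) |>.nonempty
  obtain ⟨ξ, hξ⟩ := Cardinal.infinite_pigeonhole (fun w => c s(v, w)) (hV ▸ hμ) (hK ▸ hV ▸ hcof)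
  set star := insert v ((fun w => c s(v, w)) ⁻¹' {ξ})
  refine ⟨ξ, star, ?_, ?_⟩
  · refine le_antisymm (hV ▸ Cardinal.mk_set_le _) ?_
    calc μ = #((fun w => c s(v, w)) ⁻¹' {ξ}) := by rw [hξ, hV]
      _ ≤ #star := Cardinal.mk_le_mk_of_subset (Set.subset_insert _ _)
  · rw [kConnOn_one_iff]
    refine (monoGraph c ξ).induce_connected_of_forall_adj (Set.mem_insert v _) ?_
    intro x hx hxv
    exact ⟨Ne.symm hxv, (Set.mem_insert_iff.mp hx).resolve_left hxv⟩

/-- If `μ` is infinite and `0 < λ < cf(μ)`, then `μ →_{1-c} (μ)²_λ`: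
some color class contains a connected subgraph on `μ` many vertices. -/
theorem stmt1 (μ lam : Cardinal) (hμ : ℵ₀ ≤ μ) (hlam : lam ≠ 0)
    (hcof : lam < μ.ord.cof) :
    ArrowConn μ μ 1 lam :=
  stmt1_general μ lam hμ hcof
end

section
/- For every infinite cardinal λ there exists a single coloring c : [λ⁺]² → λ such that for every cardinal μ with 3 ≤ μ ≤ λ⁺, every color ξ < λ, and every set X ⊆ λ⁺ with |X| = μ, the ξ-monochromatic graph on X is not highly connected. In particular λ⁺ →_hc (μ)²_λ fails for every μ ≥ 3. -/
/-
Well-order `λ⁺` in order type `λ⁺`, so that every proper initial segment has size at most `λ`,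
and fix an injection of each segment into the colours. Colouring `{α, β}` with `α < β` by the
image of `α` under the injection for `β`, every vertex has at most one smaller neighbour of each
colour; hence no colour class contains a cycle (look at its largest vertex). A forest is not
`2`-connected on any set `X` of at least three vertices: if it is connected on `X`, some vertex `v`
has two neighbours `a ≠ b` in `X`, and a path from `a` to `b` inside `X ∖ {v}` would close a cycle
through `v`.
-/

open Cardinal

open SimpleGraph

theorem SimpleGraph.Connected.exists_adj_adj_of_three_le {V : Type} {G : SimpleGraph V}
    (hG : G.Connected) (hV : 3 ≤ #V) : ∃ v a b : V, a ≠ b ∧ G.Adj v a ∧ G.Adj v b := by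
  by_cases hcomplete : ∀ u w : V, u ≠ w → G.Adj u w
  · obtain ⟨x⟩ := hG.nonempty
    obtain ⟨y, hyx, -⟩ := exists_ne_ne_of_three_le hV x x
    obtain ⟨z, hzx, hzy⟩ := exists_ne_ne_of_three_le hV x y
    exact ⟨x, y, z, hzy.symm, hcomplete x y hyx.symm, hcomplete x z hzx.symm⟩
  push Not at hcomplete
  obtain ⟨u, w, huw, hnadj⟩ := hcomplete
  -- otherwise the second vertex of a shortest walk between non-adjacent vertices will do
  have hdist : 1 < G.dist u w := by
    have h0 : G.dist u w ≠ 0 := fun h => huw (((hG u w).dist_eq_zero_iff).mp h)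
    have h1 : G.dist u w ≠ 1 := fun h => hnadj (dist_eq_one_iff_adj.mp h)
    omega
  obtain ⟨p, hp⟩ := (hG u w).exists_walk_length_eq_dist
  obtain ⟨x, a, b, hxa, hab, -, hxb⟩ := p.exists_adj_adj_not_adj_ne hp hdist
  exact ⟨a, x, b, hxb, hxa.symm, hab⟩

theorem SimpleGraph.IsAcyclic.not_kConnOn {V : Type} {G : SimpleGraph V} (hG : G.IsAcyclic)
    {X : Set V} {κ : Cardinal} (hX : 3 ≤ #X) (hκ : 1 < κ) : ¬ KConnOn G X κ := by
  intro hconn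
  have hX_conn : (G.induce X).Connected := by
    have h := hconn ∅ (Set.empty_subset X) (by simpa using zero_lt_one.trans hκ)
    rwa [Set.sdiff_empty] at h
  obtain ⟨⟨v, hv⟩, ⟨a, ha⟩, ⟨b, hb⟩, hne, hva, hvb⟩ := hX_conn.exists_adj_adj_of_three_le hX
  simp only [comap_adj, Function.Embedding.subtype_apply] at hva hvb
  have hab : a ≠ b := fun h => hne (Subtype.ext h)
  have hXv_conn : (G.induce (X \ {v})).Connected :=
    hconn {v} (by simpa using hv) (by simpa using hκ)
  -- a walk from `a` to `b` avoiding `v`, closed up by the edge `b v`, avoids the edge `v a`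
  let φ : G.induce (X \ {v}) →g G.deleteEdges {s(v, a)} :=
    ⟨Subtype.val, fun {x y} hxy => deleteEdges_adj.mpr ⟨hxy, by
      rw [Set.mem_singleton_iff, Sym2.eq_iff]
      rintro (⟨hxv, -⟩ | ⟨-, hyv⟩)
      exacts [x.2.2 hxv, y.2.2 hyv]⟩⟩
  have hbv : (G.deleteEdges {s(v, a)}).Adj b v := deleteEdges_adj.mpr ⟨hvb.symm, by
    rw [Set.mem_singleton_iff, Sym2.eq_iff]
    rintro (⟨-, rfl⟩ | ⟨rfl, -⟩)
    exacts [hva.ne rfl, hab rfl]⟩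
  have hreach : (G.deleteEdges {s(v, a)}).Reachable a v :=
    ((hXv_conn ⟨a, ha, hva.ne'⟩ ⟨b, hb, hvb.ne'⟩).map φ).trans hbv.reachable
  exact isBridge_iff.mp (isAcyclic_iff_forall_adj_isBridge.mp hG hva) hreach.symm

section ErdosKakutani

variable {V K : Type}

theorem monoGraph_isAcyclic [LinearOrder V] {c : Sym2 V → K}
    (hc : ∀ a, Set.InjOn (fun b => c s(a, b)) (Set.Iio a)) (ξ : K) :
    (monoGraph c ξ).IsAcyclic := by
  intro u p hp
  have hne : p.support.toFinset.Nonempty := ⟨u, List.mem_toFinset.mpr p.start_mem_support⟩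
  set m := p.support.toFinset.max' hne
  have hm : m ∈ p.support := List.mem_toFinset.mp (Finset.max'_mem _ hne)
  set q := p.rotate m hm
  have hq : q.IsCycle := hp.rotate hm
  have hlt : ∀ x, (monoGraph c ξ).Adj m x → x ∈ q.support → x < m := fun x hx hxq =>
    lt_of_le_of_ne (Finset.le_max' _ x (List.mem_toFinset.mpr
      ((p.mem_support_rotate_iff m hm).mp hxq))) hx.1.symm
  have hsnd := q.adj_snd hq.not_nil
  have hpen := (q.adj_penultimate hq.not_nil).symm
  exact hq.snd_ne_penultimate (hc m (hlt _ hsnd (q.getVert_mem_support 1))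
    (hlt _ hpen (q.getVert_mem_support _)) (hsnd.2.trans hpen.2.symm))

theorem exists_coloring_injOn_Iio [LinearOrder V] [Nonempty K]
    (hV : ∀ a : V, #(Set.Iio a) ≤ #K) :
    ∃ c : Sym2 V → K, ∀ a, Set.InjOn (fun b => c s(a, b)) (Set.Iio a) := by
  have e (a : V) : Set.Iio a ↪ K := (Cardinal.le_def _ _ |>.mp (hV a)).some
  let g (a b : V) : K := if h : b < a then e a ⟨b, h⟩ else Classical.arbitrary K
  let c : Sym2 V → K :=
    Sym2.lift ⟨fun a b => g (max a b) (min a b), fun a b => by simp only [max_comm, min_comm]⟩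
  have hc {a b : V} (h : b < a) : c s(a, b) = e a ⟨b, h⟩ := by
    simp only [c, Sym2.lift_mk, max_eq_left h.le, min_eq_right h.le]
    exact dif_pos h
  refine ⟨c, fun a b₁ hb₁ b₂ hb₂ h => ?_⟩
  simp only [hc hb₁, hc hb₂] at h
  exact congrArg Subtype.val ((e a).injective h)

theorem exists_coloring_forall_monoGraph_isAcyclic [Nonempty K] (hV : #V ≤ Order.succ #K) :
    ∃ c : Sym2 V → K, ∀ ξ, (monoGraph c ξ).IsAcyclic := by
  obtain ⟨e⟩ : Nonempty (V ↪ (Order.succ #K).ord.ToType) := by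
    rwa [← Cardinal.le_def, mk_ord_toType]
  let _ : LinearOrder V := LinearOrder.lift' e e.injective
  have hIio (a : V) : #(Set.Iio a) ≤ #K :=
    Order.lt_succ_iff.mp <| (mk_preimage_of_injective e _ e.injective).trans_lt
      ((mk_Iio_lt (e a) (by simp)).trans_eq (mk_ord_toType _))
  obtain ⟨c, hc⟩ := exists_coloring_injOn_Iio hIio
  exact ⟨c, monoGraph_isAcyclic hc⟩

end ErdosKakutani

/-- The Erdős–Kakutani coloring shows even that `λ⁺ ↛_hc (μ)²_λ` for every `μ ≥ 3`:
a single coloring of the pairs from `λ⁺` by `λ` colors admits, for no cardinal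
`3 ≤ μ ≤ λ⁺`, a size-`μ` monochromatic highly connected (i.e. `μ`-connected) subgraph.
In particular `λ⁺ →_hc (μ)²_λ` fails for every `μ ≥ 3`. -/
theorem stmt4 (lam : Cardinal) (hlam : ℵ₀ ≤ lam) :
    (∀ (V K : Type), #V = Order.succ lam → #K = lam →
      ∃ c : Sym2 V → K, ∀ (μ : Cardinal) (ξ : K) (X : Set V),
        3 ≤ μ → μ ≤ Order.succ lam → #X = μ →
          ¬ KConnOn (monoGraph c ξ) X μ) ∧
    (∀ μ : Cardinal, 3 ≤ μ → ¬ ArrowHC (Order.succ lam) μ lam) := by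
  have acyclic_coloring (V K : Type) (hV : #V = Order.succ lam) (hK : #K = lam) :
      ∃ c : Sym2 V → K, ∀ ξ, (monoGraph c ξ).IsAcyclic := by
    have : Nonempty K := mk_ne_zero_iff.mp (hK ▸ (aleph0_pos.trans_le hlam).ne')
    exact exists_coloring_forall_monoGraph_isAcyclic (hV.trans (hK ▸ rfl)).le
  have one_lt {μ : Cardinal} (hμ : 3 ≤ μ) : 1 < μ := (by norm_num : (1 : Cardinal) < 3).trans_le hμ
  refine ⟨fun V K hV hK => ?_, fun μ hμ harrow => ?_⟩
  · obtain ⟨c, hc⟩ := acyclic_coloring V K hV hK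
    exact ⟨c, fun μ ξ X hμ _ hX => (hc ξ).not_kConnOn (hμ.trans_eq hX.symm) (one_lt hμ)⟩
  · obtain ⟨c, hc⟩ := acyclic_coloring _ _ (mk_ord_toType _) (mk_ord_toType lam)
    obtain ⟨ξ, X, hX, hconn⟩ := harrow _ _ (mk_ord_toType _) (mk_ord_toType lam) c
    exact (hc ξ).not_kConnOn (hμ.trans_eq hX.symm) (one_lt hμ) hconn
end

section
/- Let λ be an infinite cardinal and μ an infinite cardinal with μ ≤ 2^λ. Then μ →_hc (μ)²_λ fails: there exists a coloring c : [μ]² → λ × 2 (a set of colors of cardinality λ, since λ is infinite) such that for no color (ξ, i) ∈ λ × 2 and no set X ⊆ μ with |X| = μ is the (ξ,i)-monochromatic graph on X highly connected. -/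
open Cardinal

/-
Sierpiński's coloring. Fix an injection `f` of `μ` into `2^λ` and well-order `μ` in type `μ`.
Color a pair `{a, b}` by a coordinate `ξ` where `f a` and `f b` differ, together with the value
at `ξ` of the `f`-image of the smaller vertex. In the color `(ξ, i)`, every edge `a < b` then has
`f a ξ = i ≠ f b ξ`. So if `b` is a vertex of `X` with `f b ξ ≠ i` (or any vertex, if there is
none, in which case `X` spans no edge at all), deleting its fewer than `μ` predecessors leaves
`b` isolated in what remains of `X`.
-/

lemma one_lt_mk_diff_of_lt {V : Type*} {X S : Set V} (hX : ℵ₀ ≤ #X) (hS : #S < #X) :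
    1 < #(X \ S : Set V) := by
  by_contra! hdiff
  have hsum : #(X \ S : Set V) + #S < #X :=
    add_lt_of_lt hX (hdiff.trans_lt (one_lt_aleph0.trans_le hX)) hS
  exact hsum.not_ge <| by
    rw [← mk_sdiff_add_mk (Set.inter_subset_left (t := S)), Set.sdiff_self_inter]
    exact add_le_add_right (mk_le_mk_of_subset Set.inter_subset_right) _

lemma not_kConnOn_of_isolated {V : Type} {G : SimpleGraph V} {X S : Set V} {κ : Cardinal}
    (hX : ℵ₀ ≤ #X) (hκ : κ ≤ #X) (hSX : S ⊆ X) (hS : #S < κ) {b : V} (hb : b ∈ X \ S)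
    (hiso : ∀ z ∈ X \ S, ¬ G.Adj b z) : ¬ KConnOn G X κ := by
  intro hconn
  have : Nontrivial (X \ S : Set V) := one_lt_iff_nontrivial.mp <|
    one_lt_mk_diff_of_lt hX (hS.trans_le hκ)
  obtain ⟨z, hbz⟩ := (hconn S hSX hS).preconnected.exists_adj_of_nontrivial ⟨b, hb⟩
  exact hiso z z.2 hbz

noncomputable def diffCoord {K β : Type*} [Nonempty K] (g h : K → β) : K :=
  Classical.epsilon fun ξ => g ξ ≠ h ξ

lemma diffCoord_comm {K β : Type*} [Nonempty K] (g h : K → β) :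
    diffCoord g h = diffCoord h g :=
  congrArg Classical.epsilon (funext fun _ => propext ne_comm)

lemma apply_diffCoord_ne {K β : Type*} [Nonempty K] {g h : K → β} (hgh : g ≠ h) :
    g (diffCoord g h) ≠ h (diffCoord g h) :=
  Classical.epsilon_spec (Function.ne_iff.mp hgh)

section Sierpinski

variable {V K : Type} [LinearOrder V] [Nonempty K]

noncomputable def sierpinskiColoring (f : V → K → Bool) : Sym2 V → K × Bool :=
  Sym2.lift ⟨fun a b => (diffCoord (f a) (f b), f (min a b) (diffCoord (f a) (f b))),
    fun a b => by dsimp only; rw [diffCoord_comm, min_comm]⟩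

lemma sierpinskiColoring_adj_of_lt {f : V → K → Bool} (hf : Function.Injective f)
    {ξ : K} {i : Bool} {a b : V} (hadj : (monoGraph (sierpinskiColoring f) (ξ, i)).Adj a b) (hab : a < b) :
    f a ξ = i ∧ f b ξ ≠ i := by
  obtain ⟨hne, hcolor⟩ := hadj
  simp only [sierpinskiColoring, Sym2.lift_mk, min_eq_left hab.le, Prod.mk.injEq] at hcolor
  obtain ⟨rfl, rfl⟩ := hcolor
  exact ⟨rfl, (apply_diffCoord_ne (hf.ne hne)).symm⟩

lemma not_kConnOn_sierpinskiColoring {f : V → K → Bool} (hf : Function.Injective f)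
    {κ : Cardinal} (hsmall : ∀ b : V, #(Set.Iio b) < κ) (d : K × Bool) {X : Set V}
    (hX : ℵ₀ ≤ #X) (hκ : κ ≤ #X) : ¬ KConnOn (monoGraph (sierpinskiColoring f) d) X κ := by
  obtain ⟨ξ, i⟩ := d
  obtain ⟨b, hbX, hb⟩ : ∃ b ∈ X, (∃ z ∈ X, f z ξ ≠ i) → f b ξ ≠ i := by
    by_cases h : ∃ z ∈ X, f z ξ ≠ i
    · obtain ⟨z, hzX, hz⟩ := h
      exact ⟨z, hzX, fun _ => hz⟩
    · obtain ⟨b, hbX⟩ : X.Nonempty := by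
        rw [← Set.nonempty_coe_sort, ← mk_ne_zero_iff]
        exact (aleph0_pos.trans_le hX).ne'
      exact ⟨b, hbX, fun h' => absurd h' h⟩
  refine not_kConnOn_of_isolated (S := X ∩ Set.Iio b) hX hκ Set.inter_subset_left
    ((mk_le_mk_of_subset Set.inter_subset_right).trans_lt (hsmall b))
    ⟨hbX, fun hb' => lt_irrefl b hb'.2⟩ ?_
  rintro z ⟨hzX, hzS⟩ hbz
  have hbz' : b < z := lt_of_le_of_ne (not_lt.mp fun h => hzS ⟨hzX, h⟩) hbz.1
  obtain ⟨hbi, hzi⟩ := sierpinskiColoring_adj_of_lt hf hbz hbz'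
  exact hb ⟨z, hzX, hzi⟩ hbi

end Sierpinski

lemma exists_coloring_not_kConnOn {V K : Type} (hV : ℵ₀ ≤ #V) (hVK : #V ≤ 2 ^ #K) :
    ∃ c : Sym2 V → K × Bool, ∀ (d : K × Bool) (X : Set V), #X = #V →
      ¬ KConnOn (monoGraph c d) X #V := by
  obtain ⟨_, _, hord⟩ := exists_ord_eq_type_lt V
  have : Nonempty K := by
    rw [← mk_ne_zero_iff]
    rintro hK
    rw [hK, power_zero] at hVK
    exact (one_lt_aleph0.trans_le hV).not_ge hVK
  obtain ⟨f⟩ : Nonempty (V ↪ (K → Bool)) := (le_def _ _).mp (by rwa [← power_def, mk_bool])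
  exact ⟨sierpinskiColoring f, fun d X hX => not_kConnOn_sierpinskiColoring f.injective
    (fun b => mk_Iio_lt b hord) d (hX ▸ hV) hX.ge⟩

/-- Proposition 4 (Sierpiński-style coloring): if `λ` is infinite and
`ℵ₀ ≤ μ ≤ 2^λ`, then `μ →_hc (μ)²_λ` fails: there is a coloring of the pairs
from `μ` by `λ × 2` many colors (a set of `λ` many colors, as `λ` is infinite)
no color class of which contains a highly connected subgraph on `μ` many vertices. -/
theorem stmt5 (lam μ : Cardinal) (hlam : ℵ₀ ≤ lam) (hμ : ℵ₀ ≤ μ)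
    (hle : μ ≤ 2 ^ lam) :
    (∀ (V K : Type), #V = μ → #K = lam →
      ∃ c : Sym2 V → K × Bool, ∀ (d : K × Bool) (X : Set V), #X = μ →
        ¬ KConnOn (monoGraph c d) X μ) ∧
    ¬ ArrowHC μ μ lam := by
  refine ⟨fun V K hV hK => ?_, fun harrow => ?_⟩
  · subst hV hK
    exact exists_coloring_not_kConnOn hμ hle
  obtain ⟨c, hc⟩ := exists_coloring_not_kConnOn (V := μ.out) (K := lam.out)
    (by rwa [mk_out]) (by rwa [mk_out, mk_out])
  have hcolors : #(lam.out × Bool) = lam := by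
    rw [mk_prod, lift_id, lift_id, mk_out, mk_bool]
    exact Cardinal.mul_eq_left hlam (natCast_lt_aleph0.le.trans hlam) two_ne_zero
  obtain ⟨d, X, hX, hconn⟩ := harrow μ.out (lam.out × Bool) μ.mk_out hcolors c
  exact hc d X (hX.trans μ.mk_out.symm) (by rwa [mk_out])
end

section
/- Let ν be an infinite cardinal, let μ = cf(ν) be its cofinality, and let λ be a cardinal. If μ →_hc (μ)²_λ fails (i.e., there exists a coloring c : [μ]² → λ such that for no ξ < λ and no X ⊆ μ with |X| = μ is the ξ-monochromatic graph on X highly connected), then ν →_hc (ν)²_λ fails (i.e., there exists a coloring d : [ν]² → λ such that for no ξ < λ and no Y ⊆ ν with |Y| = ν is the ξ-monochromatic graph on Y highly connected). -/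
open Cardinal

/-!
Let `p : ν → cf(ν)` send each ordinal to a point above it of a fixed cofinal subset of size
`cf(ν)`. Then the preimage of every set of size `< cf(ν)` is bounded in `ν`, hence of size `< ν`.
Pull a coloring `c` of `[cf(ν)]²` back along `p`. A highly connected monochromatic set `Y` of
size `ν` for the pulled-back coloring projects onto a set of size `cf(ν)`, and deleting fewer
than `cf(ν)` points downstairs deletes fewer than `ν` points of `Y`; the remaining connected graph
maps onto what is left downstairs, since its edges map to edges or collapse to points.
-/

namespace SimpleGraph

variable {V W : Type*} {G : SimpleGraph V} {H : SimpleGraph W} {f : V → W}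

lemma Reachable.map_of_adj_or_eq (hf : ∀ a b, G.Adj a b → f a = f b ∨ H.Adj (f a) (f b))
    {a b : V} (h : G.Reachable a b) : H.Reachable (f a) (f b) := by
  obtain ⟨w⟩ := h
  induction w with
  | nil => rfl
  | cons hadj _ ih =>
    rcases hf _ _ hadj with heq | hadj'
    · exact heq ▸ ih
    · exact hadj'.reachable.trans ih

lemma Connected.map_of_adj_or_eq (hf : ∀ a b, G.Adj a b → f a = f b ∨ H.Adj (f a) (f b))
    (hsurj : Function.Surjective f) (hG : G.Connected) : H.Connected := by
  refine (connected_iff H).2 ⟨fun x y => ?_, hG.nonempty.map f⟩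
  obtain ⟨a, rfl⟩ := hsurj x
  obtain ⟨b, rfl⟩ := hsurj y
  exact (hG.preconnected a b).map_of_adj_or_eq hf

end SimpleGraph

universe u in
theorem exists_map_mk_preimage_lt {α W : Type u} [LinearOrder α]
    (hα : ∀ i : α, #(Set.Iio i) < #α) (hW : #W = Order.cof α) :
    ∃ p : α → W, ∀ A : Set W, #A < #W → #(p ⁻¹' A) < #α := by
  obtain ⟨s, hs, hscard⟩ := Order.exists_cof_eq α
  obtain ⟨e⟩ : Nonempty (s ≃ W) := Cardinal.eq.1 (hscard.trans hW.symm)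
  choose q hqs hq using hs
  refine ⟨fun a => e ⟨q a, hqs a⟩, fun A hA => ?_⟩
  have hbdd : ¬ IsCofinal (Subtype.val '' (e ⁻¹' A)) := fun hcof => by
    have := Order.cof_le hcof
    rw [mk_image_eq Subtype.val_injective, mk_preimage_equiv] at this
    exact (hA.trans_eq hW).not_ge this
  obtain ⟨x, hx⟩ := not_isCofinal_iff.1 hbdd
  calc #((fun a => e ⟨q a, hqs a⟩) ⁻¹' A)
      ≤ #(Set.Iio x) := mk_le_mk_of_subset fun a ha => (hq a).trans_lt (hx _ ⟨_, ha, rfl⟩)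
    _ < #α := hα x

theorem Cardinal.le_mk_image_of_mk_preimage_lt {V W : Type*} {f : V → W} {κ κ' : Cardinal}
    (hf : ∀ S : Set W, #S < κ' → #(f ⁻¹' S) < κ) {Y : Set V} (hY : κ ≤ #Y) :
    κ' ≤ #(f '' Y) := by
  by_contra! hlt
  exact (hY.trans (mk_le_mk_of_subset (Set.subset_preimage_image f Y))).not_gt (hf _ hlt)

lemma monoGraph_comp_map_adj {V W K : Type} {c : Sym2 W → K} {ξ : K} {f : V → W} (a b : V)
    (h : (monoGraph (c ∘ Sym2.map f) ξ).Adj a b) :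
    f a = f b ∨ (monoGraph c ξ).Adj (f a) (f b) :=
  or_iff_not_imp_left.2 fun hne => ⟨hne, h.2⟩

theorem KConnOn.image {V W : Type} {G : SimpleGraph V} {H : SimpleGraph W} {f : V → W}
    (hf : ∀ a b, G.Adj a b → f a = f b ∨ H.Adj (f a) (f b)) {κ κ' : Cardinal}
    (hsmall : ∀ S : Set W, #S < κ' → #(f ⁻¹' S) < κ) {X : Set V} (hX : KConnOn G X κ) :
    KConnOn H (f '' X) κ' := by
  intro S _ hS
  set T := X ∩ f ⁻¹' S
  have hconn := hX T Set.inter_subset_left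
    ((mk_le_mk_of_subset Set.inter_subset_right).trans_lt (hsmall S hS))
  let q : ↥(X \ T) → ↥(f '' X \ S) :=
    fun y => ⟨f y, Set.mem_image_of_mem f y.2.1, fun hy => y.2.2 ⟨y.2.1, hy⟩⟩
  have hq : Function.Surjective q := by
    rintro ⟨_, ⟨y, hy, rfl⟩, hyS⟩
    exact ⟨⟨y, hy, fun hT => hyS hT.2⟩, rfl⟩
  refine hconn.map_of_adj_or_eq (f := q) (fun a b hab => ?_) hq
  exact (hf a b hab).imp Subtype.ext id

theorem stmt6_general (ν lam : Cardinal)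
    (h : ¬ ArrowHC ν.ord.cof ν.ord.cof lam) :
    ¬ ArrowHC ν ν lam := by
  intro hν
  refine h fun W K hW hK c => ?_
  obtain ⟨p, hp⟩ := exists_map_mk_preimage_lt (α := ν.ord.ToType)
    (fun i => by simpa using mk_Iio_lt i) (hW.trans (Ordinal.cof_toType _).symm)
  rw [mk_ord_toType, hW] at hp
  obtain ⟨ξ, Y, hY, hconn⟩ := hν _ K (mk_ord_toType ν) hK (c ∘ Sym2.map p)
  refine ⟨ξ, p '' Y, le_antisymm ?_ (le_mk_image_of_mk_preimage_lt hp hY.ge), ?_⟩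
  · exact (mk_set_le _).trans_eq hW
  · exact hconn.image monoGraph_comp_map_adj hp

/-- Lemma 5: let `ν` be infinite and `μ = cf(ν)` its cofinality. If
`μ →_hc (μ)²_λ` fails then `ν →_hc (ν)²_λ` fails. -/
theorem stmt6 (ν lam : Cardinal) (hν : ℵ₀ ≤ ν)
    (h : ¬ ArrowHC ν.ord.cof ν.ord.cof lam) :
    ¬ ArrowHC ν ν lam :=
  stmt6_general ν lam h
end

section
/- Let ν be an uncountable cardinal and μ < ν a cardinal such that 2^μ < ν and such that for every cardinal λ < ν, every coloring d : [ν]⁴ → λ admits a set H ⊆ ν with |H| = ν on which d is constant (both hold when ν is weakly compact). Then for every family {u_{α,β} : α < β < ν} of subsets of ν, each of cardinality at most μ, there exist a set B ⊆ ν with |B| = ν and sets V⁺_α, V⁻_α ⊆ ν for α ∈ B such that: (1) for each α ∈ B, the family {u_{α,β} : β ∈ B, β > α} is a Δ-system with root V⁺_α; (2) for each β ∈ B, the family {u_{α,β} : α ∈ B, α < β} is a Δ-system with root V⁻_β; (3) each of the families {V⁺_α : α ∈ B}, {V⁻_α : α ∈ B}, and {V⁻_α ∪ V⁺_α : α ∈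 B} forms a Δ-system; (4) the sets u_{α,β} ∖ (V⁺_α ∪ V⁻_β), for α < β in B, are pairwise disjoint. -/
/-!
Enumerate each `u α β` by `μ` slots and colour an increasing 4-tuple of ordinals by which slots
of its six sets `u (a i) (a j)` hold the same point. There are at most `2 ^ μ < ν` colours, so
some `H` of size `ν` is homogeneous, and homogeneity makes `u` indiscernible on `H`: a point
common to the sets of two pairs of a 4-tuple stays in the set of the second pair when that pair
is moved while the first one is kept in place. With `V⁺ α = ⋂_{γ > α} u α γ` and
`V⁻ β = ⋂_{γ < β} u γ β`, every Δ-system condition follows by moving pairs in this way, the only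
extra ingredient being two points `a₀ < a₁` of `H` below `B`, through which column roots are
compared.
-/

open Cardinal Set Function

universe v w

theorem exists_option_enum {α : Type v} {I : Type w} {s : Set α}
    (h : lift.{w} #s ≤ lift.{v} #I) : ∃ g : I → Option α, ∀ x, x ∈ s ↔ ∃ i, g i = some x := by
  obtain ⟨j⟩ := lift_mk_le'.1 h
  refine ⟨fun i => (partialInv j i).map Subtype.val, fun x => ⟨fun hx => ⟨j ⟨x, hx⟩, ?_⟩, ?_⟩⟩
  · simp [partialInv_left j.injective]
  · rintro ⟨i, hi⟩
    obtain ⟨y, -, rfl⟩ := Option.map_eq_some_iff.1 hi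
    exact y.2

theorem mk_fin4_arrow_lt {I : Type} {ν : Cardinal} (hν : ℵ₀ < ν) (hI : 2 ^ #I < ν) :
    #(Fin 4 → Fin 4 → Fin 4 → Fin 4 → I → I → Prop) < ν := by
  rcases finite_or_infinite I with _ | _
  · have : Finite (I → I → Prop) := inferInstance
    exact (lt_aleph0_of_finite _).trans hν
  · have hI₀ : ℵ₀ ≤ #I := aleph0_le_mk I
    have h4 : ((4 : ℕ) : Cardinal) ≤ #I := natCast_lt_aleph0.le.trans hI₀
    calc _ = 2 ^ #I := by
          simp only [mk_arrow, mk_Prop, mk_fin, lift_id, ← power_mul, mul_eq_self hI₀,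
            mul_eq_left hI₀ h4 (by simp)]
      _ < ν := hI

theorem Finset.exists_orderEmbOfFin_eq {β : Type*} [LinearOrder β] {n : ℕ} {a : Fin n → β}
    (ha : StrictMono a) :
    ∃ (s : Finset β) (h : s.card = n), (s : Set β) = Set.range a ∧ ⇑(s.orderEmbOfFin h) = a := by
  refine ⟨Finset.univ.image a, by simp [Finset.card_image_of_injective _ ha.injective], by simp, ?_⟩
  exact (Finset.orderEmbOfFin_unique _ (fun i => by simp) ha).symm

theorem apply_eq_of_strictMono_of_finset_homogeneous {β L : Type*} [LinearOrder β] {n : ℕ}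
    {H : Set β} (c : (Fin n → β) → L) {d : Finset β → L}
    (hd : ∀ s (h : s.card = n), d s = c (s.orderEmbOfFin h))
    (hH : ∀ s t : Finset β, s.card = n → t.card = n → ↑s ⊆ H → ↑t ⊆ H → d s = d t)
    {a t : Fin n → β} (ha : StrictMono a) (ht : StrictMono t) (haH : range a ⊆ H)
    (htH : range t ⊆ H) : c a = c t := by
  obtain ⟨s, hs, hsa, rfl⟩ := Finset.exists_orderEmbOfFin_eq ha
  obtain ⟨s', hs', hs't, rfl⟩ := Finset.exists_orderEmbOfFin_eq ht
  rw [← hd, ← hd]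
  exact hH s s' hs hs' (hsa ▸ haH) (hs't ▸ htH)

theorem mk_Ioi_of_subset_Iio_ord {ν : Cardinal.{v}} (hν : ℵ₀ ≤ ν) {H : Set Ordinal.{v}}
    (hHν : H ⊆ Iio ν.ord) (hH : #H = lift.{v + 1} ν) (a : H) : #(Ioi a) = lift.{v + 1} ν := by
  have : Infinite H := infinite_iff.2 (hH ▸ aleph0_le_lift.2 hν)
  rw [← compl_Iic, mk_compl_of_infinite, hH]
  calc #(Iic a) ≤ #(Iic (a : Ordinal)) :=
        mk_preimage_of_injective Subtype.val _ Subtype.val_injective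
    _ = lift (Order.succ (a : Ordinal)).card := by rw [← Order.Iio_succ, mk_Iio_ordinal]
    _ < lift ν := lift_lt.2 (lt_ord.1 ((isSuccLimit_ord hν).succ_lt (hHν a.2)))
    _ = #H := hH.symm

theorem exists_inter_eq_of_inter_subset {ι α : Type*} {V : ι → Set α} {B : Set ι}
    (h : ∀ a ∈ B, ∀ a' ∈ B, a ≠ a' → V a ∩ V a' ⊆ ⋂ c ∈ B, V c) :
    ∃ r, ∀ a ∈ B, ∀ a' ∈ B, a ≠ a' → V a ∩ V a' = r :=
  ⟨⋂ c ∈ B, V c, fun a ha a' ha' hne =>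
    (h a ha a' ha' hne).antisymm (subset_inter (biInter_subset_of_mem ha)
      (biInter_subset_of_mem ha'))⟩

section

variable {ι α : Type*} [LinearOrder ι] {u : ι → ι → Set α}

def IsTwoDimDeltaSystem (u : ι → ι → Set α) (B : Set ι) (Vp Vm : ι → Set α) : Prop :=
  (∀ α ∈ B, ∀ β ∈ B, ∀ β' ∈ B, α < β → α < β' → β ≠ β' →
    u α β ∩ u α β' = Vp α) ∧
  (∀ β ∈ B, ∀ α ∈ B, ∀ α' ∈ B, α < β → α' < β → α ≠ α' →
    u α β ∩ u α' β = Vm β) ∧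
  (∃ r, ∀ α ∈ B, ∀ α' ∈ B, α ≠ α' → Vp α ∩ Vp α' = r) ∧
  (∃ r, ∀ α ∈ B, ∀ α' ∈ B, α ≠ α' → Vm α ∩ Vm α' = r) ∧
  (∃ r, ∀ α ∈ B, ∀ α' ∈ B, α ≠ α' → (Vm α ∪ Vp α) ∩ (Vm α' ∪ Vp α') = r) ∧
  (∀ α ∈ B, ∀ β ∈ B, ∀ α' ∈ B, ∀ β' ∈ B, α < β → α' < β' →
    (α, β) ≠ (α', β') →
      (u α β \ (Vp α ∪ Vm β)) ∩ (u α' β' \ (Vp α' ∪ Vm β')) = ∅)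

theorem IsTwoDimDeltaSystem.image {κ : Type*} [LinearOrder κ] {u : κ → κ → Set α} (e : ι ↪o κ)
    {B : Set ι} {Vp Vm : ι → Set α}
    (h : IsTwoDimDeltaSystem (fun a b => u (e a) (e b)) B Vp Vm) :
    IsTwoDimDeltaSystem u (e '' B) (extend e Vp fun _ => ∅) (extend e Vm fun _ => ∅) := by
  have hV (V : ι → Set α) (a : ι) : extend e V (fun _ => ∅) (e a) = V a :=
    e.injective.extend_apply V _ a
  simpa only [IsTwoDimDeltaSystem, forall_mem_image, e.lt_iff_lt, e.injective.ne_iff, hV, ne_eq,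
    Prod.mk.injEq, e.injective.eq_iff] using h

theorem strictMono_vec4 {a b c d : ι} (hab : a < b) (hbc : b < c) (hcd : c < d) :
    StrictMono ![a, b, c, d] :=
  Fin.strictMono_iff_lt_succ.2 fun i => by fin_cases i <;> assumption

def Indiscernible (u : ι → ι → Set α) : Prop :=
  ∀ a t : Fin 4 → ι, StrictMono a → StrictMono t → ∀ i j k l : Fin 4, i < j → k < l →
    t i = a i → t j = a j → u (a i) (a j) ∩ u (a k) (a l) ⊆ u (t k) (t l)

def coincidencePattern {I : Type*} (F : ι → ι → I → Option α) (a : Fin 4 → ι) :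
    Fin 4 → Fin 4 → Fin 4 → Fin 4 → I → I → Prop :=
  fun i j k l ξ η => ∃ y, F (a i) (a j) ξ = some y ∧ F (a k) (a l) η = some y

theorem indiscernible_of_coincidencePattern_eq {I : Type*} {F : ι → ι → I → Option α}
    (hF : ∀ a b, a < b → ∀ x, x ∈ u a b ↔ ∃ i, F a b i = some x)
    (hpat : ∀ a t : Fin 4 → ι, StrictMono a → StrictMono t →
      coincidencePattern F a = coincidencePattern F t) :
    Indiscernible u := by
  intro a t ha ht i j k l hij hkl hi hj x ⟨hx, hx'⟩
  obtain ⟨ξ, hξ⟩ := (hF _ _ (ha hij) x).1 hx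
  obtain ⟨η, hη⟩ := (hF _ _ (ha hkl) x).1 hx'
  obtain ⟨y, hy, hyη⟩ : coincidencePattern F t i j k l ξ η := hpat a t ha ht ▸ ⟨x, hξ, hη⟩
  rw [hi, hj, hξ, Option.some_inj] at hy
  exact (hF _ _ (ht hkl) x).2 ⟨η, hy ▸ hyη⟩

def rowRoot (u : ι → ι → Set α) (a : ι) : Set α := ⋂ b > a, u a b

def colRoot (u : ι → ι → Set α) (b : ι) : Set α := ⋂ a < b, u a b

@[simp]
theorem mem_rowRoot {a : ι} {x : α} : x ∈ rowRoot u a ↔ ∀ b, a < b → x ∈ u a b :=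
  mem_iInter₂

@[simp]
theorem mem_colRoot {b : ι} {x : α} : x ∈ colRoot u b ↔ ∀ a, a < b → x ∈ u a b :=
  mem_iInter₂

variable [NoMaxOrder ι]

namespace Indiscernible

variable {a a' a₀ a₁ b b' c d e g : ι}

theorem inter_row_subset (hu : Indiscernible u) (hab : a < b) (hbb' : b < b') (hac : a < c) :
    u a b ∩ u a b' ⊆ u a c := by
  obtain ⟨δ, hδ⟩ := exists_gt (max b' c)
  rw [max_lt_iff] at hδ
  rcases lt_trichotomy c b' with h | rfl | h
  · rw [inter_comm]
    exact hu ![a, b, b', δ] ![a, c, b', δ] (strictMono_vec4 hab hbb' hδ.1)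
      (strictMono_vec4 hac h hδ.1) 0 2 0 1 (by decide) (by decide) rfl rfl
  · exact inter_subset_right
  · exact hu ![a, b, b', δ] ![a, b, c, δ] (strictMono_vec4 hab hbb' hδ.1)
      (strictMono_vec4 hab (hbb'.trans h) hδ.2) 0 1 0 2 (by decide) (by decide) rfl rfl

theorem inter_col_subset (hu : Indiscernible u) (haa' : a < a') (ha'b : a' < b) (hcb : c < b) :
    u a b ∩ u a' b ⊆ u c b := by
  obtain ⟨δ, hδ⟩ := exists_gt b
  rcases lt_trichotomy c a' with h | rfl | h
  · rw [inter_comm]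
    exact hu ![a, a', b, δ] ![c, a', b, δ] (strictMono_vec4 haa' ha'b hδ)
      (strictMono_vec4 h ha'b hδ) 1 2 0 2 (by decide) (by decide) rfl rfl
  · exact inter_subset_right
  · exact hu ![a, a', b, δ] ![a, c, b, δ] (strictMono_vec4 haa' ha'b hδ)
      (strictMono_vec4 (haa'.trans h) hcb hδ) 0 2 1 2 (by decide) (by decide) rfl rfl

theorem inter_subset_of_lt (hu : Indiscernible u) (hab : a < b) (hbc : b < c) (hcd : c < d)
    (heg : e < g) : u a b ∩ u c d ⊆ u e g := by
  obtain ⟨c', hc'⟩ := exists_gt (max b g)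
  obtain ⟨d', hd'⟩ := exists_gt c'
  rw [max_lt_iff] at hc'
  intro x hx
  have hx' : x ∈ u c' d' := hu ![a, b, c, d] ![a, b, c', d'] (strictMono_vec4 hab hbc hcd)
    (strictMono_vec4 hab hc'.1 hd') 0 1 2 3 (by decide) (by decide) rfl rfl hx
  exact hu ![a, b, c', d'] ![e, g, c', d'] (strictMono_vec4 hab hc'.1 hd')
    (strictMono_vec4 heg hc'.2 hd') 2 3 0 1 (by decide) (by decide) rfl rfl ⟨hx', hx.1⟩

theorem inter_row_eq_rowRoot (hu : Indiscernible u) (hab : a < b) (hab' : a < b')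
    (hne : b ≠ b') : u a b ∩ u a b' = rowRoot u a := by
  wlog h : b < b' generalizing b b'
  · rw [inter_comm]
    exact this hab' hab hne.symm (hne.lt_or_gt.resolve_left h)
  ext x
  refine ⟨fun hx => mem_rowRoot.2 fun c hac => hu.inter_row_subset hab h hac hx, fun hx => ?_⟩
  exact ⟨mem_rowRoot.1 hx b hab, mem_rowRoot.1 hx b' hab'⟩

theorem inter_col_eq_colRoot (hu : Indiscernible u) (hab : a < b) (ha'b : a' < b)
    (hne : a ≠ a') : u a b ∩ u a' b = colRoot u b := by
  wlog h : a < a' generalizing a a'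
  · rw [inter_comm]
    exact this ha'b hab hne.symm (hne.lt_or_gt.resolve_left h)
  ext x
  refine ⟨fun hx => mem_colRoot.2 fun c hcb => hu.inter_col_subset h ha'b hcb hx, fun hx => ?_⟩
  exact ⟨mem_colRoot.1 hx a hab, mem_colRoot.1 hx a' ha'b⟩

theorem rowRoot_inter_subset (hu : Indiscernible u) (hne : a ≠ a') (c : ι) :
    rowRoot u a ∩ rowRoot u a' ⊆ rowRoot u c := by
  wlog h : a < a' generalizing a a'
  · rw [inter_comm]
    exact this hne.symm (hne.lt_or_gt.resolve_left h)
  rintro x ⟨hx, hx'⟩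
  rw [mem_rowRoot] at hx hx' ⊢
  intro δ hcδ
  obtain ⟨c₁, hc₁⟩ := exists_gt (max a' δ)
  obtain ⟨c₂, hc₂⟩ := exists_gt c₁
  rw [max_lt_iff] at hc₁
  have hcol : ∀ c', c₁ ≤ c' → x ∈ u c c' := fun c' hc' =>
    hu.inter_col_subset h (hc₁.1.trans_le hc') ((hcδ.trans hc₁.2).trans_le hc')
      ⟨hx c' ((h.trans hc₁.1).trans_le hc'), hx' c' (hc₁.1.trans_le hc')⟩
  exact hu.inter_row_subset (hcδ.trans hc₁.2) hc₂ hcδ ⟨hcol c₁ le_rfl, hcol c₂ hc₂.le⟩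

theorem mem_colRoot_of_mem_of_mem (hu : Indiscernible u) (h01 : a₀ < a₁) (hb : a₁ < b) {x : α}
    (h₀ : x ∈ u a₀ b) (h₁ : x ∈ u a₁ b) : x ∈ colRoot u b :=
  (hu.inter_col_eq_colRoot (h01.trans hb) hb h01.ne).subset ⟨h₀, h₁⟩

theorem colRoot_inter_subset (hu : Indiscernible u) (h01 : a₀ < a₁) (hb : a₁ < b)
    (hb' : a₁ < b') (hne : b ≠ b') (hc : a₁ < c) :
    colRoot u b ∩ colRoot u b' ⊆ colRoot u c := by
  wlog h : b < b' generalizing b b'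
  · rw [inter_comm]
    exact this hb' hb hne.symm (hne.lt_or_gt.resolve_left h)
  rintro x ⟨hx, hx'⟩
  rw [mem_colRoot] at hx hx'
  have hrow : ∀ a, a ≤ a₁ → x ∈ u a c := fun a ha =>
    hu.inter_row_subset (ha.trans_lt hb) h (ha.trans_lt hc)
      ⟨hx a (ha.trans_lt hb), hx' a (ha.trans_lt hb')⟩
  exact hu.mem_colRoot_of_mem_of_mem h01 hc (hrow a₀ h01.le) (hrow a₁ le_rfl)

theorem colRoot_inter_rowRoot_subset (hu : Indiscernible u) (h01 : a₀ < a₁) (hb : a₁ < b)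
    (ha : a₁ < a) (hne : b ≠ a) (hc : a₁ < c) :
    colRoot u b ∩ rowRoot u a ⊆ colRoot u c := by
  rintro x ⟨hx, hx'⟩
  rw [mem_colRoot] at hx
  rw [mem_rowRoot] at hx'
  obtain ⟨δ₁, hδ₁⟩ := exists_gt (max a b)
  obtain ⟨δ₂, hδ₂⟩ := exists_gt δ₁
  rw [max_lt_iff] at hδ₁
  rcases hne.lt_or_gt with h | h
  · exact mem_colRoot.2 fun e hec => hu.inter_subset_of_lt (h01.trans hb) h hδ₁.1 hec
      ⟨hx a₀ (h01.trans hb), hx' δ₁ hδ₁.1⟩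
  · have hcol : ∀ e, e ≤ a₁ → x ∈ u e c := fun e he =>
      have hδ : x ∈ u e δ₁ := hu ![e, a, b, δ₂] ![e, a, δ₁, δ₂]
        (strictMono_vec4 (he.trans_lt ha) h (hδ₁.2.trans hδ₂))
        (strictMono_vec4 (he.trans_lt ha) hδ₁.1 hδ₂) 1 3 0 2 (by decide) (by decide) rfl rfl
        ⟨hx' δ₂ (hδ₁.1.trans hδ₂), hx e ((he.trans_lt ha).trans h)⟩
      hu.inter_row_subset ((he.trans_lt ha).trans h) hδ₁.2 (he.trans_lt hc)
        ⟨hx e ((he.trans_lt ha).trans h), hδ⟩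
    exact hu.mem_colRoot_of_mem_of_mem h01 hc (hcol a₀ h01.le) (hcol a₁ le_rfl)

theorem rootUnion_inter_subset (hu : Indiscernible u) (h01 : a₀ < a₁) (ha : a₁ < a)
    (ha' : a₁ < a') (hne : a ≠ a') (hc : a₁ < c) :
    (colRoot u a ∪ rowRoot u a) ∩ (colRoot u a' ∪ rowRoot u a') ⊆
      colRoot u c ∪ rowRoot u c := by
  rintro x ⟨hx | hx, hx' | hx'⟩
  · exact Or.inl (hu.colRoot_inter_subset h01 ha ha' hne hc ⟨hx, hx'⟩)
  · exact Or.inl (hu.colRoot_inter_rowRoot_subset h01 ha ha' hne hc ⟨hx, hx'⟩)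
  · exact Or.inl (hu.colRoot_inter_rowRoot_subset h01 ha' ha hne.symm hc ⟨hx', hx⟩)
  · exact Or.inr (hu.rowRoot_inter_subset hne c ⟨hx, hx'⟩)

theorem mem_roots_of_lt (hu : Indiscernible u) (h01 : a₀ < a₁) (h1a' : a₁ < a') (haa' : a < a')
    (hab : a < b) (ha'b' : a' < b') :
    u a b ∩ u a' b' ⊆ (rowRoot u a ∪ colRoot u b) ∪ (rowRoot u a' ∪ colRoot u b') := by
  intro x hx
  obtain ⟨δ₁, hδ₁⟩ := exists_gt (max b b')
  obtain ⟨δ₂, hδ₂⟩ := exists_gt δ₁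
  rw [max_lt_iff] at hδ₁
  rcases lt_trichotomy b a' with hba' | rfl | ha'b
  · exact Or.inl (Or.inl (mem_rowRoot.2 fun c hac =>
      hu.inter_subset_of_lt hab hba' ha'b' hac hx))
  · exact Or.inl (Or.inr (mem_colRoot.2 fun e heb =>
      hu ![a, b, b', δ₁] ![e, b, b', δ₁] (strictMono_vec4 hab ha'b' hδ₁.2)
        (strictMono_vec4 heb ha'b' hδ₁.2) 1 2 0 1 (by decide) (by decide) rfl rfl
        ⟨hx.2, hx.1⟩))
  rcases lt_trichotomy b b' with hbb' | rfl | hb'b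
  · have hrow : ∀ δ, b < δ → x ∈ u a' δ := fun δ hbδ =>
      hu ![a, a', b, b'] ![a, a', b, δ] (strictMono_vec4 haa' ha'b hbb')
        (strictMono_vec4 haa' ha'b hbδ) 0 2 1 3 (by decide) (by decide) rfl rfl hx
    exact Or.inr (Or.inl (mem_rowRoot.2 fun c ha'c =>
      hu.inter_row_subset (ha'b.trans hδ₁.1) hδ₂ ha'c
        ⟨hrow δ₁ hδ₁.1, hrow δ₂ (hδ₁.1.trans hδ₂)⟩))
  · exact Or.inl (Or.inr ((hu.inter_col_eq_colRoot hab ha'b' haa'.ne).subset hx))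
  · have hcol : ∀ e, e ≤ a₁ → x ∈ u e b := fun e he =>
      hu ![a, a', b', b] ![e, a', b', b] (strictMono_vec4 haa' ha'b' hb'b)
        (strictMono_vec4 (he.trans_lt h1a') ha'b' hb'b) 1 2 0 3 (by decide) (by decide) rfl rfl
        ⟨hx.2, hx.1⟩
    exact Or.inl (Or.inr (hu.mem_colRoot_of_mem_of_mem h01 (h1a'.trans ha'b) (hcol a₀ h01.le)
      (hcol a₁ le_rfl)))

theorem mem_roots_of_ne (hu : Indiscernible u) (h01 : a₀ < a₁) (h1a : a₁ < a) (h1a' : a₁ < a')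
    (hab : a < b) (ha'b' : a' < b') (hne : (a, b) ≠ (a', b')) :
    u a b ∩ u a' b' ⊆ (rowRoot u a ∪ colRoot u b) ∪ (rowRoot u a' ∪ colRoot u b') := by
  wlog h : a ≤ a' generalizing a a' b b'
  · rw [inter_comm, union_comm]
    exact this h1a' h1a ha'b' hab hne.symm (le_of_not_ge h)
  rcases h.lt_or_eq with h | rfl
  · exact hu.mem_roots_of_lt h01 h1a' h hab ha'b'
  · rw [← hu.inter_row_eq_rowRoot hab ha'b' fun h => hne (h ▸ rfl)]
    exact subset_union_left.trans subset_union_left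

theorem isTwoDimDeltaSystem (hu : Indiscernible u) (h01 : a₀ < a₁) :
    IsTwoDimDeltaSystem u (Ioi a₁) (rowRoot u) (colRoot u) := by
  refine ⟨fun a _ b _ b' _ => hu.inter_row_eq_rowRoot, fun b _ a _ a' _ => hu.inter_col_eq_colRoot,
    exists_inter_eq_of_inter_subset fun a _ a' _ hne =>
      subset_iInter₂ fun c _ => hu.rowRoot_inter_subset hne c,
    exists_inter_eq_of_inter_subset fun a ha a' ha' hne =>
      subset_iInter₂ fun c hc => hu.colRoot_inter_subset h01 ha ha' hne hc,
    exists_inter_eq_of_inter_subset fun a ha a' ha' hne =>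
      subset_iInter₂ fun c hc => hu.rootUnion_inter_subset h01 ha ha' hne hc,
    fun a ha b _ a' ha' b' _ hab ha'b' hne => ?_⟩
  refine eq_empty_of_forall_notMem fun x ⟨⟨hx, hxr⟩, hx', hxr'⟩ => ?_
  exact (hu.mem_roots_of_ne h01 ha ha' hab ha'b' hne ⟨hx, hx'⟩).elim hxr hxr'

end Indiscernible

end

theorem stmt9_general (ν μ : Cardinal.{0}) (hν : ℵ₀ < ν) (hexp : 2 ^ μ < ν)
    (hwc : ∀ (L : Type), #L < ν → ∀ d : Finset Ordinal.{0} → L,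
      ∃ H : Set Ordinal, H ⊆ Set.Iio ν.ord ∧ #H = Cardinal.lift.{1} ν ∧
        ∀ s t : Finset Ordinal, s.card = 4 → t.card = 4 →
          ↑s ⊆ H → ↑t ⊆ H → d s = d t)
    (u : Ordinal.{0} → Ordinal.{0} → Set Ordinal.{0})
    (hu : ∀ α β : Ordinal, α < β → β < ν.ord →
      u α β ⊆ Set.Iio ν.ord ∧ #(u α β) ≤ Cardinal.lift.{1} μ) :
    ∃ (B : Set Ordinal) (Vp Vm : Ordinal → Set Ordinal),
      B ⊆ Set.Iio ν.ord ∧ #B = Cardinal.lift.{1} ν ∧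
      -- (1) for each `α ∈ B`, `{u α β : β ∈ B, β > α}` is a Δ-system with root `Vp α`
      (∀ α ∈ B, ∀ β ∈ B, ∀ β' ∈ B, α < β → α < β' → β ≠ β' →
        u α β ∩ u α β' = Vp α) ∧
      -- (2) for each `β ∈ B`, `{u α β : α ∈ B, α < β}` is a Δ-system with root `Vm β`
      (∀ β ∈ B, ∀ α ∈ B, ∀ α' ∈ B, α < β → α' < β → α ≠ α' →
        u α β ∩ u α' β = Vm β) ∧
      -- (3) `{Vp α}`, `{Vm α}` and `{Vm α ∪ Vp α}` each form Δ-systems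
      (∃ r, ∀ α ∈ B, ∀ α' ∈ B, α ≠ α' → Vp α ∩ Vp α' = r) ∧
      (∃ r, ∀ α ∈ B, ∀ α' ∈ B, α ≠ α' → Vm α ∩ Vm α' = r) ∧
      (∃ r, ∀ α ∈ B, ∀ α' ∈ B, α ≠ α' → (Vm α ∪ Vp α) ∩ (Vm α' ∪ Vp α') = r) ∧
      -- (4) the sets `u α β \ (Vp α ∪ Vm β)` are pairwise disjoint
      (∀ α ∈ B, ∀ β ∈ B, ∀ α' ∈ B, ∀ β' ∈ B, α < β → α' < β' →
        (α, β) ≠ (α', β') →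
          (u α β \ (Vp α ∪ Vm β)) ∩ (u α' β' \ (Vp α' ∪ Vm β')) = ∅) := by
  obtain ⟨F, hF⟩ : ∃ F : Ordinal.{0} → Ordinal.{0} → μ.out → Option Ordinal.{0},
      ∀ α β, α < β → β < ν.ord → ∀ x, x ∈ u α β ↔ ∃ i, F α β i = some x := by
    choose! F hF using fun α β (h : α < β ∧ β < ν.ord) =>
      exists_option_enum (I := μ.out) (by simpa using (hu α β h.1 h.2).2)
    exact ⟨F, fun α β hαβ hβ => hF α β ⟨hαβ, hβ⟩⟩
  obtain ⟨H, hHν, hH, hhom⟩ := hwc _ (mk_fin4_arrow_lt hν (by rwa [mk_out]))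
    fun s => if h : s.card = 4 then coincidencePattern F (s.orderEmbOfFin h) else ⊥
  have hind : Indiscernible fun a b : H => u a b :=
    indiscernible_of_coincidencePattern_eq (F := fun a b : H => F a b)
      (fun a b hab => hF a b hab (hHν b.2)) fun a t ha ht =>
        apply_eq_of_strictMono_of_finset_homogeneous (coincidencePattern F)
          (fun s h => dif_pos h) hhom (Subtype.strictMono_coe _ |>.comp ha)
          (Subtype.strictMono_coe _ |>.comp ht) (range_subset_iff.2 fun i => (a i).2)
          (range_subset_iff.2 fun i => (t i).2)
  have hν₀ : lift.{1} ν ≠ 0 := lift_eq_zero.not.2 (aleph0_pos.trans hν).ne'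
  have hIoi := mk_Ioi_of_subset_Iio_ord hν.le hHν hH
  have : NoMaxOrder H :=
    ⟨fun a => nonempty_coe_sort.1 <| mk_ne_zero_iff.1 <| (hIoi a).trans_ne hν₀⟩
  obtain ⟨a₀⟩ : Nonempty H := mk_ne_zero_iff.1 (hH.trans_ne hν₀)
  obtain ⟨a₁, h01⟩ := exists_gt a₀
  refine ⟨_, _, _, ?_, ?_,
    (hind.isTwoDimDeltaSystem h01).image (u := u) (OrderEmbedding.subtype (· ∈ H))⟩
  · rintro _ ⟨a, -, rfl⟩
    exact hHν a.2
  · rw [mk_image_eq (OrderEmbedding.subtype _).injective, hIoi]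

/-- Lemma 8 (two-dimensional Δ-system lemma). Let `ν` be an uncountable cardinal
and `μ < ν` with `2^μ < ν`, and suppose that every coloring of the 4-element
subsets of `ν` by fewer than `ν` colors has a homogeneous set of size `ν` (as
holds when `ν` is weakly compact). Then every family `{u α β : α < β < ν}` of
subsets of `ν` of size at most `μ` admits a `B ⊆ ν` of size `ν` and roots
`Vp α`, `Vm β` satisfying the Δ-system conditions (1)-(4). -/
theorem stmt9 (ν μ : Cardinal.{0}) (hν : ℵ₀ < ν) (hμν : μ < ν) (hexp : 2 ^ μ < ν)
    (hwc : ∀ (L : Type), #L < ν → ∀ d : Finset Ordinal.{0} → L,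
      ∃ H : Set Ordinal, H ⊆ Set.Iio ν.ord ∧ #H = Cardinal.lift.{1} ν ∧
        ∀ s t : Finset Ordinal, s.card = 4 → t.card = 4 →
          ↑s ⊆ H → ↑t ⊆ H → d s = d t)
    (u : Ordinal.{0} → Ordinal.{0} → Set Ordinal.{0})
    (hu : ∀ α β : Ordinal, α < β → β < ν.ord →
      u α β ⊆ Set.Iio ν.ord ∧ #(u α β) ≤ Cardinal.lift.{1} μ) :
    ∃ (B : Set Ordinal) (Vp Vm : Ordinal → Set Ordinal),
      B ⊆ Set.Iio ν.ord ∧ #B = Cardinal.lift.{1} ν ∧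
      -- (1) for each `α ∈ B`, `{u α β : β ∈ B, β > α}` is a Δ-system with root `Vp α`
      (∀ α ∈ B, ∀ β ∈ B, ∀ β' ∈ B, α < β → α < β' → β ≠ β' →
        u α β ∩ u α β' = Vp α) ∧
      -- (2) for each `β ∈ B`, `{u α β : α ∈ B, α < β}` is a Δ-system with root `Vm β`
      (∀ β ∈ B, ∀ α ∈ B, ∀ α' ∈ B, α < β → α' < β → α ≠ α' →
        u α β ∩ u α' β = Vm β) ∧
      -- (3) `{Vp α}`, `{Vm α}` and `{Vm α ∪ Vp α}` each form Δ-systems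
      (∃ r, ∀ α ∈ B, ∀ α' ∈ B, α ≠ α' → Vp α ∩ Vp α' = r) ∧
      (∃ r, ∀ α ∈ B, ∀ α' ∈ B, α ≠ α' → Vm α ∩ Vm α' = r) ∧
      (∃ r, ∀ α ∈ B, ∀ α' ∈ B, α ≠ α' → (Vm α ∪ Vp α) ∩ (Vm α' ∪ Vp α') = r) ∧
      -- (4) the sets `u α β \ (Vp α ∪ Vm β)` are pairwise disjoint
      (∀ α ∈ B, ∀ β ∈ B, ∀ α' ∈ B, ∀ β' ∈ B, α < β → α' < β' →
        (α, β) ≠ (α', β') →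
          (u α β \ (Vp α ∪ Vm β)) ∩ (u α' β' \ (Vp α' ∪ Vm β')) = ∅) :=
  stmt9_general ν μ hν hexp hwc u hu
end

section
/- Assume the continuum hypothesis, 2^{ℵ₀} = ℵ₁. Then ℵ₂ →_hc (ℵ₁)²_{ℵ₀} holds: for every coloring c : [ℵ₂]² → ω there exist a color i < ω and a set A ⊆ ℵ₂ with |A| = ℵ₁ such that the i-monochromatic graph on A is highly connected (i.e., ℵ₁-connected). -/
/-!
The core is Erdős–Rado, `(2^ℵ₀)⁺ → (ℵ₁)²_ℵ₀`. Take a set `M` of size `≤ 𝔠` in which every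
type over a countable subset of `M` that is realized at all is already realized, and a point
`α ∉ M`. Going through `M` in a well-order, keep `β` whenever it colours its pairs with the
points kept before it as `α` does. The kept set is uncountable: were it countable, the choice of
`M` would supply a further point of `M` to keep. On it the colour of `{γ, β}` with `γ` kept first
depends only on `γ`, so by pigeonhole one colour class of `γ ↦ c {γ, α}` is an uncountable
clique. Under CH it has a subset of size `ℵ₁`, which is complete and hence highly connected.
-/
open Cardinal

inductive CountableArityTerm (P : Type) : Type where
  | const : CountableArityTerm P
  | node : (ℕ → CountableArityTerm P) → P → CountableArityTerm P

namespace CountableArityTerm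

variable {P : Type}

def encode {T : Type} (j : ((ℕ → T) × P) ⊕ Unit ↪ T) : CountableArityTerm P → T
  | const => j (.inr ())
  | node g p => j (.inl (fun n => (g n).encode j, p))

theorem encode_injective {T : Type} (j : ((ℕ → T) × P) ⊕ Unit ↪ T) :
    Function.Injective (encode j) := by
  intro a
  induction a with
  | const => rintro (_ | _) h <;> simp_all [encode]
  | node g p ih =>
    rintro (_ | ⟨g', p'⟩) h
    · simp_all [encode]
    · obtain ⟨hg, rfl⟩ := Prod.ext_iff.1 (Sum.inl_injective (j.injective h))
      rw [funext fun n => ih n (congrFun hg n)]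

theorem mk_le {κ : Cardinal} (hκ : ℵ₀ ≤ κ) (hκω : κ ^ ℵ₀ = κ) (hP : #P ≤ κ) :
    #(CountableArityTerm P) ≤ κ := by
  have hcard : #(((ℕ → κ.out) × P) ⊕ Unit) ≤ #κ.out := by
    simp only [mk_sum, mk_prod, ← power_def, mk_nat, mk_out, mk_unit, lift_id, hκω]
    calc κ * #P + 1 ≤ κ * κ + κ := by gcongr; exact one_le_aleph0.trans hκ
      _ = κ := by rw [mul_eq_self hκ, add_eq_self hκ]
  obtain ⟨j⟩ := hcard
  simpa using mk_le_of_injective (encode_injective j)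

variable {V : Type} (F : (ℕ → V) → P → V) (v₀ : V)

def eval : CountableArityTerm P → V
  | const => v₀
  | node g p => F (fun n => (g n).eval) p

end CountableArityTerm

/-- Evaluating all terms yields the closure at once, with no recursion of length `ω₁`. -/
theorem exists_closed_under_countable_arity {V P : Type} (F : (ℕ → V) → P → V) (v₀ : V)
    {κ : Cardinal} (hκ : ℵ₀ ≤ κ) (hκω : κ ^ ℵ₀ = κ) (hP : #P ≤ κ) :
    ∃ M : Set V, v₀ ∈ M ∧ #M ≤ κ ∧ ∀ e : ℕ → V, (∀ n, e n ∈ M) → ∀ p, F e p ∈ M := by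
  refine ⟨Set.range (CountableArityTerm.eval F v₀), ⟨.const, rfl⟩,
    mk_range_le.trans (CountableArityTerm.mk_le hκ hκω hP), fun e he p => ?_⟩
  choose g hg using he
  exact ⟨.node g p, by simp [CountableArityTerm.eval, hg]⟩

section ErdosRado

variable {V K : Type} (c : Sym2 V → K)

/-- `t` stands for a type over `H`: the colours of the pairs `{γ, β}`, `γ ∈ H`. -/
def RealizesCountableTypes (M : Set V) : Prop :=
  ∀ H ⊆ M, H.Countable → ∀ t : V → K, (∃ β ∉ H, ∀ γ ∈ H, c s(γ, β) = t γ) →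
    ∃ β ∈ M, β ∉ H ∧ ∀ γ ∈ H, c s(γ, β) = t γ

theorem exists_realizesCountableTypes [Countable K] [Nonempty V] :
    ∃ M : Set V, #M ≤ 𝔠 ∧ RealizesCountableTypes c M := by
  let F : (ℕ → V) → (ℕ → K) → V := fun e τ =>
    Classical.epsilon fun β => β ∉ Set.range e ∧ ∀ n, c s(e n, β) = τ n
  have hP : #(ℕ → K) ≤ 𝔠 := by
    rw [← power_def, mk_nat, ← aleph0_power_aleph0]
    exact power_le_power_right mk_le_aleph0
  obtain ⟨M, hv₀, hMcard, hMF⟩ := exists_closed_under_countable_arity F (Classical.arbitrary V)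
    aleph0_le_continuum continuum_power_aleph0 hP
  refine ⟨M, hMcard, fun H hHM hH t ⟨β, hβH, hβ⟩ => ?_⟩
  rcases H.eq_empty_or_nonempty with rfl | hne
  · exact ⟨_, hv₀, by simp⟩
  obtain ⟨e, rfl⟩ := hH.exists_eq_range hne
  have hF : F e (t ∘ e) ∉ Set.range e ∧ ∀ n, c s(e n, F e (t ∘ e)) = t (e n) :=
    Classical.epsilon_spec (p := fun β => β ∉ Set.range e ∧ ∀ n, c s(e n, β) = t (e n))
      ⟨β, hβH, fun n => hβ _ ⟨n, rfl⟩⟩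
  exact ⟨_, hMF e (fun n => hHM ⟨n, rfl⟩) _, hF.1, by rintro _ ⟨n, rfl⟩; exact hF.2 n⟩

variable (r : V → V → Prop) [IsWellFounded V r]

def greedySet (M : Set V) (α : V) : Set V :=
  {β | IsWellFounded.fix r (fun β ih => β ∈ M ∧ ∀ γ (h : r γ β), ih γ h → c s(γ, β) = c s(γ, α)) β}

variable {c r} {M : Set V} {α : V}

theorem mem_greedySet_iff {β : V} :
    β ∈ greedySet c r M α ↔ β ∈ M ∧ ∀ γ, r γ β → γ ∈ greedySet c r M α → c s(γ, β) = c s(γ, α) :=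
  iff_of_eq (IsWellFounded.fix_eq r _ β)

theorem greedySet_subset : greedySet c r M α ⊆ M := fun _ hβ => (mem_greedySet_iff.1 hβ).1

theorem color_eq_of_mem_greedySet {γ β : V} (hγ : γ ∈ greedySet c r M α)
    (hβ : β ∈ greedySet c r M α) (hγβ : r γ β) : c s(γ, β) = c s(γ, α) :=
  (mem_greedySet_iff.1 hβ).2 γ hγβ hγ

theorem not_countable_greedySet (hM : RealizesCountableTypes c M) (hα : α ∉ M) :
    ¬ (greedySet c r M α).Countable := fun hcount => by
  obtain ⟨β, hβM, hβ, hβα⟩ := hM _ greedySet_subset hcount (fun γ => c s(γ, α))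
    ⟨α, fun h => hα (greedySet_subset h), fun _ _ => rfl⟩
  exact hβ (mem_greedySet_iff.2 ⟨hβM, fun γ _ hγ => hβα γ hγ⟩)

end ErdosRado

theorem Set.exists_not_countable_inter_preimage_singleton {α β : Type*} [Countable β]
    {s : Set α} (hs : ¬ s.Countable) (f : α → β) : ∃ b, ¬ (s ∩ f ⁻¹' {b}).Countable := by
  by_contra! h
  refine hs ((Set.countable_iUnion h).mono fun x hx => ?_)
  exact Set.mem_iUnion_of_mem (f x) ⟨hx, rfl⟩

/-- Erdős–Rado, `(2^ℵ₀)⁺ → (ℵ₁)²_ℵ₀`. -/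
theorem exists_uncountable_pairwise_of_continuum_lt {V K : Type} [Countable K] (hV : 𝔠 < #V)
    (c : Sym2 V → K) :
    ∃ (ξ : K) (X : Set V), ¬ X.Countable ∧ X.Pairwise fun a b => c s(a, b) = ξ := by
  have : Nonempty V := mk_ne_zero_iff.1 (ne_bot_of_gt hV)
  obtain ⟨M, hMcard, hM⟩ := exists_realizesCountableTypes c
  obtain ⟨α, hα⟩ : ∃ α, α ∉ M := by
    by_contra! h
    exact (hMcard.trans_lt hV).ne (by rw [Set.eq_univ_of_forall h, mk_univ])
  obtain ⟨ξ, hξ⟩ := Set.exists_not_countable_inter_preimage_singleton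
    (not_countable_greedySet (r := WellOrderingRel) hM hα) fun γ => c s(γ, α)
  refine ⟨ξ, _, hξ, fun γ hγ β hβ hne => ?_⟩
  rcases trichotomous_of WellOrderingRel γ β with h | rfl | h
  · exact (color_eq_of_mem_greedySet hγ.1 hβ.1 h).trans hγ.2
  · exact absurd rfl hne
  · exact Sym2.eq_swap ▸ (color_eq_of_mem_greedySet hβ.1 hγ.1 h).trans hβ.2

theorem kConnOn_of_isClique {V : Type} {G : SimpleGraph V} {X : Set V} {κ : Cardinal}
    (hX : G.IsClique X) (hκ : κ ≤ #X) : KConnOn G X κ := fun S _ hS => by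
  obtain ⟨x, hxX, hxS⟩ :=
    Set.not_subset.1 fun hXS => (mk_le_mk_of_subset hXS).not_gt (hS.trans_le hκ)
  have : Nonempty ↥(X \ S) := ⟨⟨x, hxX, hxS⟩⟩
  rw [SimpleGraph.induce_eq_top.2 (hX.subset Set.sdiff_subset)]
  exact SimpleGraph.connected_top

/-- Assuming the continuum hypothesis `2^ℵ₀ = ℵ₁`, the relation
`ℵ₂ →_hc (ℵ₁)²_{ℵ₀}` holds. -/
theorem stmt11 (hCH : 2 ^ ℵ₀ = aleph 1) :
    ArrowHC (aleph 2) (aleph 1) ℵ₀ := by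
  intro V K hV hK c
  have hcont : 𝔠 < #V := by
    have : continuum.{0} = ℵ₁ := lift_injective (by simpa [two_power_aleph0] using hCH)
    rw [this, hV]
    exact aleph_lt_aleph.2 one_lt_two
  have : Countable K := mk_le_aleph0_iff.1 hK.le
  obtain ⟨ξ, Y, hY, hYξ⟩ := exists_uncountable_pairwise_of_continuum_lt hcont c
  obtain ⟨X, hXY, hX⟩ := le_mk_iff_exists_subset.1 <|
    aleph_one_le_iff.2 (not_le.1 (mt le_aleph0_iff_set_countable.1 hY))
  have hXclique : (monoGraph c ξ).IsClique X := fun a ha b hb hab =>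
    ⟨hab, hYξ (hXY ha) (hXY hb) hab⟩
  exact ⟨ξ, X, hX, kConnOn_of_isClique hXclique hX.ge⟩
end
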